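/- Let X and Y be N×N column-stochastic matrices and p an N-dimensional probability vector that is invariant for both, i.e., Xp = p and Yp = p. Then H_p(Y) ≤ H_p(XY) ≤ H_p(X) + H_p(Y), where H_p(T) = Σ_ν p_ν H(t_ν) is the weighted entropy of T with columns t_ν. -/

import Mathlib

open Finset

/-- Classical relative entropy `H(u‖v) = Σ_i u_i log(u_i/v_i)`;
the convention `0 · log(0/x) = 0` holds automatically in Lean. -/
noncomputable def relEnt {ι : Type*} [Fintype ι] (u v : ι → ℝ) : ℝ :=
  ∑ i, u i * Real.log (u i / v i)

/-- Shannon entropy `H(u) = -Σ_i u_i log u_i` (with `0 · log 0 = 0`). -/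
noncomputable def shEnt {ι : Type*} [Fintype ι] (u : ι → ℝ) : ℝ :=
  -∑ i, u i * Real.log (u i)

/-- A probability vector: nonnegative entries summing to 1. -/
def IsProbVec {ι : Type*} [Fintype ι] (p : ι → ℝ) : Prop :=
  (∀ i, 0 ≤ p i) ∧ ∑ i, p i = 1

/-- A column-stochastic matrix: nonnegative entries, every column sums to 1. -/
def IsColStochastic {ι : Type*} [Fintype ι] (T : Matrix ι ι ℝ) : Prop :=
  (∀ i j, 0 ≤ T i j) ∧ ∀ j, ∑ i, T i j = 1

/-- Weighted relative entropy `H_p(A‖B) = Σ_ν p_ν H(a_ν‖b_ν)` over the columns. -/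
noncomputable def wRelEnt {ι : Type*} [Fintype ι] (p : ι → ℝ) (A B : Matrix ι ι ℝ) : ℝ :=
  ∑ ν, p ν * relEnt (fun i => A i ν) (fun i => B i ν)

/-- Weighted entropy `H_p(T) = Σ_ν p_ν H(t_ν)` over the columns. -/
noncomputable def wEnt {ι : Type*} [Fintype ι] (p : ι → ℝ) (T : Matrix ι ι ℝ) : ℝ :=
  ∑ ν, p ν * shEnt (fun i => T i ν)

/-! Write `H_p(T) = H(p) - I(T)` with `I(T) = Σ_ν p_ν H(t_ν‖p)`, the mutual information of the
joint law `T_{iν} p_ν`, whose marginals are both `p` because `Tp = p`; here `I(T)` is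
`wRelEnt p T (replicateCol ι p)`. The columns of `XY` are `X y_ν` and `p = Xp`, so the
data-processing inequality `H(Xu‖Xv) ≤ H(u‖v)`, which is the log-sum inequality applied row by
row, gives `I(XY) ≤ I(Y)`, i.e. the lower bound.

For the upper bound, `H(X y)` is at most the entropy of the joint vector `(X_{ik} y_k)_{i,k}`,
which by the chain rule is `H(y) + Σ_k y_k H(x_k)`. Averaging over `ν` with weights `p_ν` and
using `Yp = p` turns the last sum into `H_p(X)`. -/

open Real Matrix

lemma sub_le_mul_log_div {a b : ℝ} (ha : 0 ≤ a) (hb : 0 < b) : a - b ≤ a * log (a / b) := by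
  rcases ha.eq_or_lt with rfl | ha
  · simpa using hb.le
  have h := one_sub_inv_le_log_of_pos (div_pos ha hb)
  rw [inv_div] at h
  calc a - b = a * (1 - b / a) := by field_simp
    _ ≤ a * log (a / b) := mul_le_mul_of_nonneg_left h ha.le

section

variable {ι : Type*} [Fintype ι]

theorem sum_mul_log_div_sum_le {a b : ι → ℝ} (ha : ∀ i, 0 ≤ a i) (hb : ∀ i, 0 ≤ b i)
    (hab : ∀ i, b i = 0 → a i = 0) :
    (∑ i, a i) * log ((∑ i, a i) / ∑ i, b i) ≤ ∑ i, a i * log (a i / b i) := by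
  set A := ∑ i, a i
  set B := ∑ i, b i
  rcases (sum_nonneg fun i _ => ha i : 0 ≤ A).eq_or_lt with hA | hA
  · have ha0 := (sum_eq_zero_iff_of_nonneg fun i _ => ha i).1 hA.symm
    simp [show A = 0 from hA.symm, ha0]
  have hB : 0 < B := by
    refine (sum_nonneg fun i _ => hb i : 0 ≤ B).lt_of_ne fun hB => hA.ne' ?_
    have hb0 := (sum_eq_zero_iff_of_nonneg fun i _ => hb i).1 hB.symm
    exact sum_eq_zero fun i hi => hab i (hb0 i hi)
  have hAB : 0 < A / B := div_pos hA hB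
  have key : ∀ i, a i - b i * (A / B) ≤ a i * log (a i / b i) - a i * log (A / B) := by
    intro i
    rcases (ha i).eq_or_lt with hai | hai
    · simpa [← hai] using mul_nonneg (hb i) hAB.le
    have hbi : 0 < b i := (hb i).lt_of_ne fun h => hai.ne' (hab i h.symm)
    have h := sub_le_mul_log_div hai.le (mul_pos hbi hAB)
    rwa [← div_div, log_div (div_pos hai hbi).ne' hAB.ne', mul_sub] at h
  calc A * log (A / B) = A * log (A / B) + ∑ i, (a i - b i * (A / B)) := by
        rw [sum_sub_distrib, ← sum_mul, mul_div_cancel₀ _ hB.ne']; ring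
    _ ≤ A * log (A / B) + ∑ i, (a i * log (a i / b i) - a i * log (A / B)) :=
        (add_le_add_iff_left _).2 (sum_le_sum fun i _ => key i)
    _ = ∑ i, a i * log (a i / b i) := by rw [sum_sub_distrib, ← sum_mul]; ring

theorem shEnt_eq_sum_negMulLog (u : ι → ℝ) : shEnt u = ∑ i, negMulLog (u i) := by
  simp [shEnt, negMulLog_eq_neg]

theorem negMulLog_sum_le {c : ι → ℝ} (hc : ∀ i, 0 ≤ c i) :
    negMulLog (∑ i, c i) ≤ ∑ i, negMulLog (c i) := by
  simp only [negMulLog_eq_neg, sum_mul, ← sum_neg_distrib]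
  refine sum_le_sum fun i _ => neg_le_neg ?_
  rcases (hc i).eq_or_lt with h | h
  · simp [← h]
  · exact mul_le_mul_of_nonneg_left (log_le_log h (single_le_sum (fun j _ => hc j) (mem_univ i)))
      h.le

theorem relEnt_eq_neg_shEnt_sub {u v : ι → ℝ} (huv : ∀ i, v i = 0 → u i = 0) :
    relEnt u v = -shEnt u - ∑ i, u i * log (v i) := by
  simp only [relEnt, shEnt, neg_neg, ← sum_sub_distrib]
  refine sum_congr rfl fun i _ => ?_
  by_cases hu : u i = 0
  · simp [hu]
  · rw [log_div hu (mt (huv i) hu)]; ring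

variable {κ : Type*} [Fintype κ]

theorem shEnt_mulVec_le {X : Matrix κ ι ℝ} (hX0 : ∀ i k, 0 ≤ X i k) (hX1 : ∀ k, ∑ i, X i k = 1)
    {y : ι → ℝ} (hy : ∀ k, 0 ≤ y k) :
    shEnt (X *ᵥ y) ≤ ∑ k, y k * shEnt (fun i => X i k) + shEnt y := by
  simp only [shEnt_eq_sum_negMulLog]
  calc ∑ i, negMulLog ((X *ᵥ y) i) ≤ ∑ i, ∑ k, negMulLog (X i k * y k) :=
        sum_le_sum fun i _ => negMulLog_sum_le fun k => mul_nonneg (hX0 i k) (hy k)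
    _ = ∑ k, y k * ∑ i, negMulLog (X i k) + ∑ k, (∑ i, X i k) * negMulLog (y k) := by
        simp only [negMulLog_mul, sum_add_distrib, mul_sum, sum_mul]
        rw [sum_comm]
        congr 1
        exact sum_comm
    _ = ∑ k, y k * ∑ i, negMulLog (X i k) + ∑ k, negMulLog (y k) := by simp [hX1]

theorem relEnt_mulVec_le {X : Matrix κ ι ℝ} (hX0 : ∀ i k, 0 ≤ X i k) (hX1 : ∀ k, ∑ i, X i k = 1)
    {u v : ι → ℝ} (hu : ∀ k, 0 ≤ u k) (hv : ∀ k, 0 ≤ v k) (huv : ∀ k, v k = 0 → u k = 0) :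
    relEnt (X *ᵥ u) (X *ᵥ v) ≤ relEnt u v := by
  calc relEnt (X *ᵥ u) (X *ᵥ v)
      ≤ ∑ i, ∑ k, X i k * u k * log (X i k * u k / (X i k * v k)) :=
        sum_le_sum fun i _ => sum_mul_log_div_sum_le (fun k => mul_nonneg (hX0 i k) (hu k))
          (fun k => mul_nonneg (hX0 i k) (hv k))
          (fun k h => by rcases mul_eq_zero.1 h with h | h <;> simp [h, huv k])
    _ = ∑ i, ∑ k, X i k * (u k * log (u k / v k)) := by
        refine sum_congr rfl fun i _ => sum_congr rfl fun k _ => ?_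
        rcases eq_or_ne (X i k) 0 with h | h
        · simp [h]
        · rw [mul_div_mul_left _ _ h, mul_assoc]
    _ = relEnt u v := by
        rw [sum_comm]
        simp only [← sum_mul, hX1, one_mul, relEnt]

variable {p : ι → ℝ}

theorem apply_mul_eq_zero_of_mulVec_eq_self {T : Matrix ι ι ℝ} (hT : ∀ i j, 0 ≤ T i j)
    (hp : ∀ i, 0 ≤ p i) (hTp : T *ᵥ p = p) {i : ι} (hi : p i = 0) (ν : ι) :
    T i ν * p ν = 0 :=
  (sum_eq_zero_iff_of_nonneg fun ν _ => mul_nonneg (hT i ν) (hp ν)).1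
    ((congrFun hTp i).trans hi) ν (mem_univ ν)

theorem wRelEnt_replicateCol_of_mulVec_eq_self {T : Matrix ι ι ℝ} (hT : ∀ i j, 0 ≤ T i j)
    (hp : ∀ i, 0 ≤ p i) (hTp : T *ᵥ p = p) :
    wRelEnt p T (replicateCol ι p) = shEnt p - wEnt p T := by
  have hcol : ∀ ν, p ν * relEnt (fun i => T i ν) p =
      p ν * (-shEnt (fun i => T i ν) - ∑ i, T i ν * log (p i)) := by
    intro ν
    rcases eq_or_ne (p ν) 0 with h | h
    · simp [h]
    · rw [relEnt_eq_neg_shEnt_sub fun i hi =>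
        (mul_eq_zero.1 (apply_mul_eq_zero_of_mulVec_eq_self hT hp hTp hi ν)).resolve_right h]
  calc wRelEnt p T (replicateCol ι p)
      = ∑ ν, p ν * (-shEnt (fun i => T i ν) - ∑ i, T i ν * log (p i)) :=
        sum_congr rfl fun ν _ => hcol ν
    _ = -wEnt p T - ∑ i, (T *ᵥ p) i * log (p i) := by
        simp only [mul_sub, mul_neg, sum_sub_distrib, sum_neg_distrib, wEnt, mulVec,
          dotProduct, mul_sum, sum_mul]
        rw [sum_comm]
        congr 1
        exact sum_congr rfl fun _ _ => sum_congr rfl fun _ _ => by ring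
    _ = shEnt p - wEnt p T := by rw [hTp, shEnt]; ring

theorem wRelEnt_mul_le {X Y : Matrix ι ι ℝ} (hX : IsColStochastic X) (hY : ∀ i j, 0 ≤ Y i j)
    (hp : ∀ i, 0 ≤ p i) (hXp : X *ᵥ p = p) (hYp : Y *ᵥ p = p) :
    wRelEnt p (X * Y) (replicateCol ι p) ≤ wRelEnt p Y (replicateCol ι p) := by
  refine sum_le_sum fun ν _ => ?_
  rcases eq_or_ne (p ν) 0 with h | h
  · simp [h]
  refine mul_le_mul_of_nonneg_left ?_ (hp ν)
  have h := relEnt_mulVec_le hX.1 hX.2 (fun k => hY k ν) hp fun k hk =>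
    (mul_eq_zero.1 (apply_mul_eq_zero_of_mulVec_eq_self hY hp hYp hk ν)).resolve_right h
  rwa [hXp] at h

theorem wEnt_le_wEnt_mul {X Y : Matrix ι ι ℝ} (hX : IsColStochastic X) (hY : ∀ i j, 0 ≤ Y i j)
    (hp : ∀ i, 0 ≤ p i) (hXp : X *ᵥ p = p) (hYp : Y *ᵥ p = p) :
    wEnt p Y ≤ wEnt p (X * Y) := by
  have hXY : ∀ i j, 0 ≤ (X * Y) i j := fun i j =>
    sum_nonneg fun k _ => mul_nonneg (hX.1 i k) (hY k j)
  have hXYp : (X * Y) *ᵥ p = p := by rw [← mulVec_mulVec, hYp, hXp]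
  have h := wRelEnt_mul_le hX hY hp hXp hYp
  rwa [wRelEnt_replicateCol_of_mulVec_eq_self hXY hp hXYp,
    wRelEnt_replicateCol_of_mulVec_eq_self hY hp hYp, sub_le_sub_iff_left] at h

theorem wEnt_mul_le_add {X Y : Matrix ι ι ℝ} (hX : IsColStochastic X) (hY : ∀ i j, 0 ≤ Y i j)
    (hp : ∀ i, 0 ≤ p i) (hYp : Y *ᵥ p = p) :
    wEnt p (X * Y) ≤ wEnt p X + wEnt p Y := by
  calc wEnt p (X * Y)
      ≤ ∑ ν, p ν * (∑ k, Y k ν * shEnt (fun i => X i k) + shEnt (fun i => Y i ν)) :=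
        sum_le_sum fun ν _ =>
          mul_le_mul_of_nonneg_left (shEnt_mulVec_le hX.1 hX.2 fun k => hY k ν) (hp ν)
    _ = ∑ k, (Y *ᵥ p) k * shEnt (fun i => X i k) + wEnt p Y := by
        simp only [mul_add, sum_add_distrib, mul_sum, wEnt, mulVec, dotProduct, sum_mul]
        rw [sum_comm]
        congr 1
        exact sum_congr rfl fun _ _ => sum_congr rfl fun _ _ => by ring
    _ = wEnt p X + wEnt p Y := by rw [hYp]; rfl

end

/-- Subadditivity of the weighted entropy at a common invariant probability
vector: if `Xp = p` and `Yp = p` then `H_p(Y) ≤ H_p(XY) ≤ H_p(X) + H_p(Y)`. -/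
theorem wEnt_mul_between {N : ℕ} (X Y : Matrix (Fin N) (Fin N) ℝ)
    (hX : IsColStochastic X) (hY : IsColStochastic Y)
    (p : Fin N → ℝ) (hp : IsProbVec p)
    (hXp : X.mulVec p = p) (hYp : Y.mulVec p = p) :
    wEnt p Y ≤ wEnt p (X * Y) ∧ wEnt p (X * Y) ≤ wEnt p X + wEnt p Y :=
  ⟨wEnt_le_wEnt_mul hX hY.1 hp.1 hXp hYp, wEnt_mul_le_add hX hY.1 hp.1 hYp⟩
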